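/- The function θ(x) = (Γ(x+1)/Γ(x+1/2))² - x is strictly decreasing on the interval (-1/2, ∞), with lim_{x→∞} θ(x) = 1/4 and lim_{x→(-1/2)⁺} θ(x) = 1/2; consequently 1/4 < θ(x) < 1/2 for all x > -1/2. -/

import Mathlib

/-!
Write `R x = (Γ(x + 1) / Γ(x + 1/2))²` and `q x = ((2x + 2) / (2x + 1))²` (`shiftFactor`), so
that `R (x + 1) = q x * R x`. If `F (y + 1) ≤ q y * F y` on `(-1/2, ∞)` and `F` is bounded below
there, then `F / R` decreases along `x, x + 1, x + 2, …` while `R (x + n) ≥ x + n → ∞`, hence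
`F x ≥ 0`. Applied to `R x - (x + 1/4)` and to `(2x + 1)² / (4x + 3) - R x` this traps `R x - x`
between `1/4` and `1/4 + 1 / (4 (4x + 3))`. Applied to `F y = (R y - y) - (R (y + u) - (y + u))`
the step inequality reduces to that upper bound on `R (y + u)` and holds strictly, which gives
strict monotonicity. The crude bounds `x ≤ R x ≤ x + 1/2` ensuring boundedness come from the
log-convexity of `Γ`, and the limit at `-1/2` from `R x = ((x + 1/2) Γ(x + 1) / Γ(x + 3/2))²`.
-/

open Real Filter

theorem nonneg_of_div_antitone {u v : ℕ → ℝ} (hv : ∀ n, 0 < v n)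
    (hv_top : Tendsto v atTop atTop) (hu : BddBelow (Set.range u))
    (h : ∀ n, u (n + 1) / v (n + 1) ≤ u n / v n) : 0 ≤ u 0 := by
  obtain ⟨C, hC⟩ := hu
  have hanti : Antitone fun n => u n / v n := antitone_nat_of_succ_le h
  have hlow : ∀ n, C / v n ≤ u 0 / v 0 := fun n =>
    (div_le_div_of_nonneg_right (hC ⟨n, rfl⟩) (hv n).le).trans (hanti n.zero_le)
  have hquot : 0 ≤ u 0 / v 0 := le_of_tendsto' (tendsto_const_nhds.div_atTop hv_top) hlow
  simpa using (le_div_iff₀ (hv 0)).1 hquot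

theorem Gamma_midpoint_sq_le_mul {s t : ℝ} (hs : 0 < s) (ht : 0 < t) :
    Gamma ((s + t) / 2) ^ 2 ≤ Gamma s * Gamma t := by
  have h := Gamma_mul_add_mul_le_rpow_Gamma_mul_rpow_Gamma hs ht
    (by norm_num : (0 : ℝ) < 1 / 2) (by norm_num : (0 : ℝ) < 1 / 2) (by norm_num)
  rw [← sqrt_eq_rpow, ← sqrt_eq_rpow, show 1 / 2 * s + 1 / 2 * t = (s + t) / 2 by ring] at h
  calc Gamma ((s + t) / 2) ^ 2 ≤ (√(Gamma s) * √(Gamma t)) ^ 2 :=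
        pow_le_pow_left₀ (Gamma_pos_of_pos (by positivity)).le h 2
    _ = Gamma s * Gamma t := by
        rw [mul_pow, sq_sqrt (Gamma_pos_of_pos hs).le, sq_sqrt (Gamma_pos_of_pos ht).le]

theorem Gamma_add_three_halves {x : ℝ} (hx : x + 1 / 2 ≠ 0) :
    Gamma (x + 3 / 2) = (x + 1 / 2) * Gamma (x + 1 / 2) := by
  rw [show x + 3 / 2 = x + 1 / 2 + 1 by ring, Gamma_add_one hx]

noncomputable def gammaRatioSq (x : ℝ) : ℝ := (Gamma (x + 1) / Gamma (x + 1 / 2)) ^ 2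

noncomputable def shiftFactor (x : ℝ) : ℝ := ((2 * x + 2) / (2 * x + 1)) ^ 2

section Algebra

variable {t s : ℝ}

theorem shiftFactor_pos (ht : -(1 / 2) < t) : 0 < shiftFactor t :=
  pow_pos (div_pos (by linarith) (by linarith)) 2

theorem shiftFactor_le_shiftFactor (ht : -(1 / 2) < t) (hts : t ≤ s) :
    shiftFactor s ≤ shiftFactor t := by
  refine pow_le_pow_left₀ (div_nonneg (by linarith) (by linarith)) ?_ 2
  rw [div_le_div_iff₀ (by linarith) (by linarith)]
  linarith

theorem shiftFactor_sub_mul_lt (ht : -(1 / 2) < t) (hts : t < s) :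
    (shiftFactor t - shiftFactor s) * ((2 * s + 1) ^ 2 / (4 * s + 3))
      < (shiftFactor t - 1) * (s - t) := by
  have hA : 0 < (2 * t + 1) ^ 2 := pow_pos (by linarith) 2
  have hB : 0 < (2 * s + 1) ^ 2 := pow_pos (by linarith) 2
  have hC : 0 < 4 * s + 3 := by linarith
  rw [shiftFactor, shiftFactor, div_pow, div_pow, div_sub_div _ _ hA.ne' hB.ne',
    div_sub_one hA.ne', div_mul_div_comm, div_mul_eq_mul_div,
    div_lt_div_iff₀ (by positivity) hA]
  -- after clearing denominators the two sides differ by exactly `(2t+1)²(2s+1)²(s-t)`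
  linarith [mul_pos (mul_pos hA hB) (sub_pos.2 hts)]

end Algebra

section GammaRatio

variable {x : ℝ}

theorem gammaRatioSq_pos (hx : -(1 / 2) < x) : 0 < gammaRatioSq x := by
  have h₁ := Gamma_pos_of_pos (show 0 < x + 1 by linarith)
  have h₂ := Gamma_pos_of_pos (show 0 < x + 1 / 2 by linarith)
  unfold gammaRatioSq
  positivity

theorem gammaRatioSq_add_one (hx : -(1 / 2) < x) :
    gammaRatioSq (x + 1) = shiftFactor x * gammaRatioSq x := by
  unfold gammaRatioSq shiftFactor
  rw [Gamma_add_one (by linarith : x + 1 ≠ 0), show x + 1 + 1 / 2 = x + 3 / 2 by ring,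
    Gamma_add_three_halves (by linarith), mul_div_mul_comm, mul_pow,
    ← mul_div_mul_left (x + 1) _ (two_ne_zero' ℝ)]
  ring_nf

theorem le_gammaRatioSq (x : ℝ) : x ≤ gammaRatioSq x := by
  rcases le_or_gt x 0 with hx0 | hx0
  · exact hx0.trans (sq_nonneg _)
  have h := Gamma_midpoint_sq_le_mul hx0 (show 0 < x + 1 by linarith)
  rw [show (x + (x + 1)) / 2 = x + 1 / 2 by ring, Gamma_add_one hx0.ne'] at h
  have hG := Gamma_pos_of_pos (show 0 < x + 1 / 2 by linarith)
  unfold gammaRatioSq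
  rw [Gamma_add_one hx0.ne', div_pow, le_div_iff₀ (by positivity)]
  linarith [mul_le_mul_of_nonneg_left h hx0.le]

theorem gammaRatioSq_le (hx : -(1 / 2) < x) : gammaRatioSq x ≤ x + 1 / 2 := by
  have h := Gamma_midpoint_sq_le_mul (show 0 < x + 1 / 2 by linarith)
    (show 0 < x + 3 / 2 by linarith)
  rw [show (x + 1 / 2 + (x + 3 / 2)) / 2 = x + 1 by ring,
    Gamma_add_three_halves (by linarith)] at h
  have hG := Gamma_pos_of_pos (show 0 < x + 1 / 2 by linarith)
  unfold gammaRatioSq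
  rw [div_pow, div_le_iff₀ (by positivity)]
  linarith

theorem nonneg_of_le_shiftFactor_mul {F : ℝ → ℝ} (hF : BddBelow (F '' Set.Ioi (-(1 / 2))))
    (hstep : ∀ y, -(1 / 2) < y → F (y + 1) ≤ shiftFactor y * F y) (hx : -(1 / 2) < x) :
    0 ≤ F x := by
  have hxn : ∀ n : ℕ, -(1 / 2) < x + n := fun n => by linarith [n.cast_nonneg (α := ℝ)]
  have hratio : ∀ n : ℕ, F (x + ↑(n + 1)) / gammaRatioSq (x + ↑(n + 1))
      ≤ F (x + n) / gammaRatioSq (x + n) := fun n => by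
    rw [Nat.cast_add_one, ← add_assoc, gammaRatioSq_add_one (hxn n), ← div_div,
      div_le_div_iff_of_pos_right (gammaRatioSq_pos (hxn n)),
      div_le_iff₀ (shiftFactor_pos (hxn n)), mul_comm]
    exact hstep _ (hxn n)
  have h := nonneg_of_div_antitone (u := fun n => F (x + n))
    (fun n => gammaRatioSq_pos (hxn n))
    (tendsto_atTop_mono (fun n => le_gammaRatioSq _)
      (tendsto_atTop_add_const_left _ x tendsto_natCast_atTop_atTop))
    (hF.mono (by rintro _ ⟨n, rfl⟩; exact ⟨x + n, hxn n, rfl⟩)) hratio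
  simpa using h

theorem add_quarter_le_gammaRatioSq (hx : -(1 / 2) < x) : x + 1 / 4 ≤ gammaRatioSq x := by
  suffices 0 ≤ gammaRatioSq x - (x + 1 / 4) by linarith
  refine nonneg_of_le_shiftFactor_mul (F := fun y => gammaRatioSq y - (y + 1 / 4))
    ⟨-(1 / 4), ?_⟩ (fun y hy => ?_) hx
  · rintro _ ⟨y, -, rfl⟩
    linarith [le_gammaRatioSq y]
  · have hpoly : shiftFactor y * (y + 1 / 4) ≤ y + 5 / 4 := by
      rw [shiftFactor, div_pow, div_mul_eq_mul_div, div_le_iff₀ (pow_pos (by linarith) 2)]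
      linarith
    simp only [gammaRatioSq_add_one hy]
    linarith

theorem gammaRatioSq_le_sq_div (hx : -(1 / 2) < x) :
    gammaRatioSq x ≤ (2 * x + 1) ^ 2 / (4 * x + 3) := by
  suffices 0 ≤ (2 * x + 1) ^ 2 / (4 * x + 3) - gammaRatioSq x by linarith
  refine nonneg_of_le_shiftFactor_mul
    (F := fun y => (2 * y + 1) ^ 2 / (4 * y + 3) - gammaRatioSq y) ⟨-(1 / 4), ?_⟩
    (fun y hy => ?_) hx
  · rintro _ ⟨y, hy : -(1 / 2) < y, rfl⟩
    have : y + 1 / 4 ≤ (2 * y + 1) ^ 2 / (4 * y + 3) := by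
      rw [le_div_iff₀ (by linarith)]
      linarith
    linarith [gammaRatioSq_le hy]
  · have hpoly : (2 * (y + 1) + 1) ^ 2 / (4 * (y + 1) + 3)
        ≤ shiftFactor y * ((2 * y + 1) ^ 2 / (4 * y + 3)) := by
      rw [shiftFactor, div_pow, div_mul_div_comm, div_le_div_iff₀ (by linarith)
        (mul_pos (pow_pos (by linarith) 2) (by linarith))]
      linarith [sq_nonneg (2 * y + 1)]
    simp only [gammaRatioSq_add_one hy]
    linarith

theorem gammaRatioSq_sub_strictAntiOn :
    StrictAntiOn (fun x => gammaRatioSq x - x) (Set.Ioi (-(1 / 2))) := by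
  intro t (ht : -(1 / 2) < t) s _ hts
  set F : ℝ → ℝ := fun y =>
    (gammaRatioSq y - y) - (gammaRatioSq (y + (s - t)) - (y + (s - t)))
  have hstep : ∀ y, -(1 / 2) < y → F (y + 1) < shiftFactor y * F y := by
    intro y hy
    have hyu : -(1 / 2) < y + (s - t) := by linarith
    have hlt := shiftFactor_sub_mul_lt hy (show y < y + (s - t) by linarith)
    have hle := mul_le_mul_of_nonneg_left (gammaRatioSq_le_sq_div hyu)
      (sub_nonneg.2 (shiftFactor_le_shiftFactor hy (show y ≤ y + (s - t) by linarith)))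
    simp only [F, show y + 1 + (s - t) = y + (s - t) + 1 by ring,
      gammaRatioSq_add_one hy, gammaRatioSq_add_one hyu]
    linarith
  have hF : BddBelow (F '' Set.Ioi (-(1 / 2))) := by
    refine ⟨-(1 / 4), ?_⟩
    rintro _ ⟨y, hy : -(1 / 2) < y, rfl⟩
    linarith [add_quarter_le_gammaRatioSq hy,
      gammaRatioSq_le (show -(1 / 2) < y + (s - t) by linarith)]
  have hnext : 0 ≤ F (t + 1) :=
    nonneg_of_le_shiftFactor_mul hF (fun y hy => (hstep y hy).le) (by linarith)
  have hpos : 0 < F t :=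
    pos_of_mul_pos_right (hnext.trans_lt (hstep t ht)) (shiftFactor_pos ht).le
  simp only [F, add_sub_cancel] at hpos
  linarith

theorem tendsto_gammaRatioSq_sub_atTop :
    Tendsto (fun x => gammaRatioSq x - x) atTop (nhds (1 / 4)) := by
  have hupper : Tendsto (fun x : ℝ => 1 / 4 + 1 / 4 / (4 * x + 3)) atTop (nhds (1 / 4)) := by
    simpa using (tendsto_const_nhds.div_atTop (tendsto_atTop_add_const_right _ 3
      ((tendsto_id (α := ℝ)).const_mul_atTop four_pos))).const_add (1 / 4 : ℝ)
  refine tendsto_of_tendsto_of_tendsto_of_le_of_le' tendsto_const_nhds hupper ?_ ?_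
  · filter_upwards [eventually_gt_atTop (-(1 / 2))] with x hx
    linarith [add_quarter_le_gammaRatioSq hx]
  · filter_upwards [eventually_gt_atTop (-(1 / 2))] with x hx
    have : (2 * x + 1) ^ 2 / (4 * x + 3) = x + 1 / 4 + 1 / 4 / (4 * x + 3) := by
      rw [show (2 * x + 1) ^ 2 = (x + 1 / 4) * (4 * x + 3) + 1 / 4 by ring, add_div,
        mul_div_cancel_right₀ _ (by linarith)]
    linarith [gammaRatioSq_le_sq_div hx]

theorem tendsto_gammaRatioSq_sub_nhdsGT :
    Tendsto (fun x => gammaRatioSq x - x) (nhdsWithin (-(1 / 2)) (Set.Ioi (-(1 / 2))))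
      (nhds (1 / 2)) := by
  have hΓ : ∀ {c : ℝ}, 0 < c → ContinuousAt Real.Gamma c := fun hc =>
    (Real.differentiableAt_Gamma fun m => by linarith [m.cast_nonneg (α := ℝ)]).continuousAt
  have h₁ : ContinuousAt (fun x : ℝ => Real.Gamma (x + 1)) (-(1 / 2)) :=
    ContinuousAt.comp_of_eq (g := Real.Gamma) (hΓ one_half_pos)
      (continuous_add_const 1).continuousAt (by norm_num)
  have h₂ : ContinuousAt (fun x : ℝ => Real.Gamma (x + 3 / 2)) (-(1 / 2)) :=
    ContinuousAt.comp_of_eq (g := Real.Gamma) (hΓ one_pos)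
      (continuous_add_const _).continuousAt (by norm_num)
  have hcont : ContinuousAt
      (fun x => ((x + 1 / 2) * Gamma (x + 1) / Gamma (x + 3 / 2)) ^ 2 - x) (-(1 / 2)) :=
    ((((continuous_add_const _).continuousAt.mul h₁).div h₂ (by norm_num)).pow 2).sub
      continuousAt_id
  have hval : ((-(1 / 2) + 1 / 2) * Gamma (-(1 / 2) + 1) / Gamma (-(1 / 2) + 3 / 2)) ^ 2
      - -(1 / 2) = (1 / 2 : ℝ) := by norm_num
  refine (hval ▸ hcont.tendsto.mono_left nhdsWithin_le_nhds).congr' ?_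
  filter_upwards [self_mem_nhdsWithin] with x (hx : -(1 / 2) < x)
  rw [gammaRatioSq, Gamma_add_three_halves (by linarith), mul_div_mul_left _ _ (by linarith)]

end GammaRatio

theorem watson_monotonicity :
    StrictAntiOn (fun x : ℝ => (Gamma (x + 1) / Gamma (x + 1 / 2)) ^ 2 - x)
        (Set.Ioi (-(1 / 2) : ℝ)) ∧
      Tendsto (fun x : ℝ => (Gamma (x + 1) / Gamma (x + 1 / 2)) ^ 2 - x) atTop
        (nhds (1 / 4)) ∧
      Tendsto (fun x : ℝ => (Gamma (x + 1) / Gamma (x + 1 / 2)) ^ 2 - x)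
        (nhdsWithin (-(1 / 2)) (Set.Ioi (-(1 / 2) : ℝ))) (nhds (1 / 2)) ∧
      ∀ x : ℝ, -(1 / 2) < x →
        1 / 4 < (Gamma (x + 1) / Gamma (x + 1 / 2)) ^ 2 - x ∧
          (Gamma (x + 1) / Gamma (x + 1 / 2)) ^ 2 - x < 1 / 2 := by
  refine ⟨gammaRatioSq_sub_strictAntiOn, tendsto_gammaRatioSq_sub_atTop,
    tendsto_gammaRatioSq_sub_nhdsGT, fun x hx => ⟨?_, ?_⟩⟩
  · have hx₁ : -(1 / 2) < x + 1 := by linarith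
    calc 1 / 4 ≤ gammaRatioSq (x + 1) - (x + 1) := by
          linarith [add_quarter_le_gammaRatioSq hx₁]
      _ < gammaRatioSq x - x := gammaRatioSq_sub_strictAntiOn hx hx₁ (by linarith)
  · have hmid : -(1 / 2) < x / 2 - 1 / 4 := by linarith
    calc gammaRatioSq x - x < gammaRatioSq (x / 2 - 1 / 4) - (x / 2 - 1 / 4) :=
          gammaRatioSq_sub_strictAntiOn hmid hx (by linarith)
      _ ≤ 1 / 2 := by linarith [gammaRatioSq_le hmid]
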